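/- Step-by-step search correctness of the hidden star-like chain (existence part of Theorem 1). Fix g ∈ G, integers s and u, an element h ∈ G (representing the hash value H(W) of the queried keyword W), a natural number m, exponents r : Fin (m+1) → ℤ and pointer values Pt : Fin (m+1) → G₁. Define the chain of keyword-searchable ciphertexts C : Fin (m+1) → G₁ × G × G₁ by C 0 = (e(g^s, h)^u, g^{r 0}, e(g^s, h)^{r 0} · Pt 0) and C (j+1) = (Pt j, g^{r (j+1)}, e(g^s, h)^{r (j+1)} · Pt (j+1)) for j+1 ≤ m. Define the sequence of pointers disclosed by the search algorithm using the trapdoor h^s and the structure's public part g^u by p 0 = e(g^u, h^s) and p (j+1) = (e((C j).2, h^s))⁻¹ · (C j).3. Then p j = (C j).1 for every j ≤ m, and moreover the pointer disclosed from the last ciphertext satisfies (e((C m).2, h^s))⁻¹ · (C m).3 = Pt m. -/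

import Mathlib

/-!
A bilinear map satisfies `e (x ^ a) (y ^ b) = e (x ^ b) y ^ a`, since both sides equal
`e x y ^ (a * b)`. Hence the head pointer `e (g ^ u) (h ^ s)` equals `e (g ^ s) h ^ u`, and for a
ciphertext `(_, g ^ r, e (g ^ s) h ^ r * P)` the mask `e (g ^ r) (h ^ s)` equals `e (g ^ s) h ^ r`,
so unmasking the third component yields `P`, the first component of the next ciphertext.
-/

section Bilinear

variable {G G₁ : Type*} [CommGroup G] [CommGroup G₁] {e : G → G → G₁}

theorem bilinear_zpow_left (hbl : ∀ x y z : G, e (x * y) z = e x z * e y z)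
    (x z : G) (a : ℤ) : e (x ^ a) z = e x z ^ a :=
  map_zpow (MonoidHom.mk' (e · z) (hbl · · z)) x a

theorem bilinear_zpow_right (hbr : ∀ x y z : G, e x (y * z) = e x y * e x z)
    (x z : G) (a : ℤ) : e x (z ^ a) = e x z ^ a :=
  map_zpow (MonoidHom.mk' (e x) (hbr x)) z a

theorem bilinear_zpow_zpow_swap (hbl : ∀ x y z : G, e (x * y) z = e x z * e y z)
    (hbr : ∀ x y z : G, e x (y * z) = e x y * e x z) (x y : G) (a b : ℤ) :
    e (x ^ a) (y ^ b) = e (x ^ b) y ^ a := by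
  rw [bilinear_zpow_left hbl, bilinear_zpow_right hbr, bilinear_zpow_left hbl]

theorem bilinear_unmask (hbl : ∀ x y z : G, e (x * y) z = e x z * e y z)
    (hbr : ∀ x y z : G, e x (y * z) = e x y * e x z) (g h : G) (s r : ℤ) (P : G₁) :
    (e (g ^ r) (h ^ s))⁻¹ * (e (g ^ s) h ^ r * P) = P := by
  rw [bilinear_zpow_zpow_swap hbl hbr, inv_mul_cancel_left]

end Bilinear

/-- Step-by-step search correctness of the hidden star-like chain
(existence part of Theorem 1). -/
theorem spchs_chain_search_correct
    {G G₁ : Type*} [CommGroup G] [CommGroup G₁]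
    (e : G → G → G₁)
    (hbl : ∀ x y z : G, e (x * y) z = e x z * e y z)
    (hbr : ∀ x y z : G, e x (y * z) = e x y * e x z)
    (g h : G) (s u : ℤ) (m : ℕ)
    (r : Fin (m + 1) → ℤ) (Pt : Fin (m + 1) → G₁)
    (C : Fin (m + 1) → G₁ × G × G₁)
    (p : Fin (m + 1) → G₁)
    (hC0 : C 0 = (e (g ^ s) h ^ u, g ^ r 0, e (g ^ s) h ^ r 0 * Pt 0))
    (hCsucc : ∀ j : Fin m,
      C j.succ = (Pt j.castSucc, g ^ r j.succ, e (g ^ s) h ^ r j.succ * Pt j.succ))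
    (hp0 : p 0 = e (g ^ u) (h ^ s))
    (hpsucc : ∀ j : Fin m,
      p j.succ = (e (C j.castSucc).2.1 (h ^ s))⁻¹ * (C j.castSucc).2.2) :
    (∀ j : Fin (m + 1), p j = (C j).1) ∧
      (e (C (Fin.last m)).2.1 (h ^ s))⁻¹ * (C (Fin.last m)).2.2 = Pt (Fin.last m) := by
  have unmask : ∀ j, (e (C j).2.1 (h ^ s))⁻¹ * (C j).2.2 = Pt j := by
    intro j
    induction j using Fin.cases with
    | zero => rw [hC0]; exact bilinear_unmask hbl hbr g h s _ _
    | succ i => rw [hCsucc i]; exact bilinear_unmask hbl hbr g h s _ _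
  refine ⟨fun j => ?_, unmask _⟩
  induction j using Fin.cases with
  | zero => rw [hp0, hC0, bilinear_zpow_zpow_swap hbl hbr]
  | succ i => rw [hpsucc i, unmask, hCsucc i]
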